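/- arXiv:2110.02160 — 3 statements merged into one kernel-verified Lean document; each statement's English description precedes it below -/
import Mathlib

section
/- Improved goal-oriented CRE bound (abstract form): let $H$ be a real Hilbert space, $W_0 \subseteq H$ a closed subspace, and let $q, q_h, \hat q$ satisfy $q - q_h \in W_0$, $q - \hat q \perp W_0$; similarly $\tilde q, \tilde q_h, \hat{\tilde q}$ with $\tilde q - \tilde q_h \in W_0$, $\tilde q - \hat{\tilde q} \perp W_0$. Let $\hat q^m = (\hat q + q_h)/2$ and $C_h = \tfrac12 \langle \hat q - q_h, \hat{\tilde q} - \tilde q_h\rangle$. Then $|\langle q-q_h, \tilde q-\tilde q_h\rangle - C_h| \le \|q - \hat q^m\| \cdot \|\hat{\tilde q} - \tilde q_h\|$. -/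
open RealInnerProductSpace

/-- Improved goal-oriented constitutive-relation-error bound (abstract form):
with the computable correction `C_h = ½ ⟪q̂ - q_h, q̂̃ - q̃_h⟫` and
`q̂ᵐ = (q̂ + q_h)/2`, one has
`|⟪q - q_h, q̃ - q̃_h⟫ - C_h| ≤ ‖q - q̂ᵐ‖ ⬝ ‖q̂̃ - q̃_h‖`. -/
theorem improved_goal_oriented_cre_bound
    {H : Type*} [NormedAddCommGroup H] [InnerProductSpace ℝ H] [CompleteSpace H]
    (W₀ : Submodule ℝ H) (hW₀ : IsClosed (W₀ : Set H))
    (q qh qhat : H)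
    (hmem : q - qh ∈ W₀)
    (horth : ∀ w ∈ W₀, ⟪q - qhat, w⟫ = 0)
    (qt qth qthat : H)
    (htmem : qt - qth ∈ W₀)
    (htorth : ∀ w ∈ W₀, ⟪qt - qthat, w⟫ = 0) :
    |⟪q - qh, qt - qth⟫ - (1 / 2) * ⟪qhat - qh, qthat - qth⟫| ≤
      ‖q - (2 : ℝ)⁻¹ • (qhat + qh)‖ * ‖qthat - qth‖ := by
  have h1 : ⟪qt - qthat, q - qh⟫ = 0 := htorth _ hmem
  have key : ⟪q - qh, qt - qth⟫ - (1 / 2) * ⟪qhat - qh, qthat - qth⟫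
      = ⟪q - (2 : ℝ)⁻¹ • (qhat + qh), qthat - qth⟫ := by
    have h2 : ⟪q - qh, qt - qthat⟫ = 0 := by rw [real_inner_comm]; exact h1
    have e1 : qt - qth = (qt - qthat) + (qthat - qth) := by abel
    rw [e1, inner_add_right, h2, zero_add]
    have e2 : q - (2 : ℝ)⁻¹ • (qhat + qh) = (q - qh) - (2 : ℝ)⁻¹ • (qhat - qh) := by
      module
    rw [e2]
    simp only [inner_sub_left, real_inner_smul_left]
    ring
  rw [key]
  exact abs_real_inner_le_norm _ _
end

section
/- Skew-symmetric splitting bound: let $V$ be a real Hilbert space, $B$ a bilinear form decomposed as $B = B_{\mathrm{sym}} + B_{\mathrm{skew}}$ with $B_{\mathrm{sym}}$ symmetric, continuous and coercive (inducing norm $|||v||| = \sqrt{B_{\mathrm{sym}}(v,v)}$) and $B_{\mathrm{skew}}$ skew-symmetric ($B_{\mathrm{skew}}(w,v) = -B_{\mathrm{skew}}(v,w)$) with finite skew norm $|||w|||_{\mathrm{skew}} = \sup_{v \ne 0} |B_{\mathrm{skew}}(w,v)|/|||v|||$. Let $u$ solve $B(u,\cdot) = F$ on $V$ and $u_h$ be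 the Galerkin solution on a closed subspace $V_h$. Then for any $\mu = u - v_h$ with $v_h \in V_h$, setting $e = u - u_h$, one has $|||e||| \le |||\mu||| + |||\mu|||_{\mathrm{skew}}$. -/
private lemma cs_aux {V : Type*} [AddCommGroup V] [Module ℝ V]
    (P : V →ₗ[ℝ] V →ₗ[ℝ] ℝ) (hs : ∀ x y, P x y = P y x)
    (hpos : ∀ v, 0 ≤ P v v) (x y : V) :
    P x y ≤ Real.sqrt (P x x) * Real.sqrt (P y y) := by
  have hq : ∀ t : ℝ, 0 ≤ P y y * (t * t) + (2 * P x y) * t + P x x := by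
    intro t
    have := hpos (x + t • y)
    simp only [map_add, map_smul, LinearMap.add_apply, LinearMap.smul_apply,
      smul_eq_mul] at this
    rw [hs y x] at this
    nlinarith [this]
  have hd := discrim_le_zero hq
  rw [discrim] at hd
  have h1 : (P x y) ^ 2 ≤ P x x * P y y := by nlinarith
  calc P x y ≤ |P x y| := le_abs_self _
    _ = Real.sqrt ((P x y) ^ 2) := (Real.sqrt_sq_eq_abs _).symm
    _ ≤ Real.sqrt (P x x * P y y) := Real.sqrt_le_sqrt h1
    _ = Real.sqrt (P x x) * Real.sqrt (P y y) :=
        Real.sqrt_mul (hpos x) _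

/-- Skew-symmetric splitting bound: with `B = B_sym + B_skew`, `B_sym` symmetric
continuous coercive with energy norm `|||v||| = √(B_sym v v)`, and the skew norm
`|||w|||_skew = sup_{v ≠ 0} |B_skew w v| / |||v|||`, for the Galerkin error
`e = u - u_h` and any interpolation error `μ = u - v_h` with `v_h ∈ V_h`, one
has `|||e||| ≤ |||μ||| + |||μ|||_skew`. -/
theorem skew_splitting_bound
    {V : Type*} [NormedAddCommGroup V] [InnerProductSpace ℝ V] [CompleteSpace V]
    [Nontrivial V]
    (B Bsym Bskew : V →ₗ[ℝ] V →ₗ[ℝ] ℝ)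
    (hsym_def : ∀ w v : V, Bsym w v = (1 / 2) * (B w v + B v w))
    (hskew_def : ∀ w v : V, Bskew w v = (1 / 2) * (B w v - B v w))
    (M : ℝ) (hBsym_cont : ∀ v w : V, |Bsym v w| ≤ M * ‖v‖ * ‖w‖)
    (α : ℝ) (hα : 0 < α) (hBsym_coer : ∀ v : V, α * ‖v‖ ^ 2 ≤ Bsym v v)
    (F : V →L[ℝ] ℝ)
    (u : V) (hu : ∀ v : V, B u v = F v)
    (Vh : Submodule ℝ V) (hVh : IsClosed (Vh : Set V))
    (uh : V) (huh_mem : uh ∈ Vh) (huh : ∀ v ∈ Vh, B uh v = F v)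
    (vh : V) (hvh : vh ∈ Vh)
    -- the skew norm of μ = u - vh, assumed finite (the sup is attained as a supremum)
    (hbdd : BddAbove {r : ℝ | ∃ v : V, v ≠ 0 ∧
      r = |Bskew (u - vh) v| / Real.sqrt (Bsym v v)}) :
    Real.sqrt (Bsym (u - uh) (u - uh)) ≤
      Real.sqrt (Bsym (u - vh) (u - vh)) +
        sSup {r : ℝ | ∃ v : V, v ≠ 0 ∧
          r = |Bskew (u - vh) v| / Real.sqrt (Bsym v v)} := by
  set e := u - uh with he
  set μ := u - vh with hμ
  set S := sSup {r : ℝ | ∃ v : V, v ≠ 0 ∧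
      r = |Bskew μ v| / Real.sqrt (Bsym v v)} with hS
  have hpos : ∀ v : V, 0 ≤ Bsym v v := fun v =>
    le_trans (by positivity) (hBsym_coer v)
  have hsymm : ∀ x y, Bsym x y = Bsym y x := by
    intro x y; rw [hsym_def, hsym_def]; ring
  -- S is nonneg
  have hSnn : 0 ≤ S := by
    obtain ⟨v, hv⟩ := exists_ne (0 : V)
    have hmem : |Bskew μ v| / Real.sqrt (Bsym v v) ∈
        {r : ℝ | ∃ v : V, v ≠ 0 ∧ r = |Bskew μ v| / Real.sqrt (Bsym v v)} :=
      ⟨v, hv, rfl⟩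
    exact le_trans (by positivity) (le_csSup hbdd hmem)
  by_cases hez : e = 0
  · rw [hez]
    simp only [map_zero, LinearMap.zero_apply, Real.sqrt_zero]
    positivity
  -- sqrt(Bsym e e) > 0
  have hee : 0 < Bsym e e := by
    have := hBsym_coer e
    have : 0 < α * ‖e‖ ^ 2 := by
      have := norm_pos_iff.mpr hez; positivity
    linarith [hBsym_coer e]
  have hse : 0 < Real.sqrt (Bsym e e) := Real.sqrt_pos.mpr hee
  -- Galerkin orthogonality
  have horth : ∀ w ∈ Vh, B e w = 0 := by
    intro w hw
    have : B e w = B u w - B uh w := by rw [he, map_sub, LinearMap.sub_apply]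
    rw [this, hu w, huh w hw]; ring
  -- key: Bsym e e = B e μ
  have hkey : Bsym e e = B e μ := by
    have hw : e - μ ∈ Vh := by
      have : e - μ = vh - uh := by rw [he, hμ]; abel
      rw [this]; exact Vh.sub_mem hvh huh_mem
    have h1 : B e (e - μ) = B e e - B e μ := map_sub (B e) e μ
    have h2 : B e (e - μ) = 0 := horth _ hw
    rw [h1] at h2
    have h3 : B e e = Bsym e e := by
      rw [hsym_def]; ring
    linarith
  -- B e μ = Bsym e μ - Bskew μ e
  have hsplit : B e μ = Bsym e μ - Bskew μ e := by
    rw [hsym_def, hskew_def]; ring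
  -- skew bound
  have hskb : |Bskew μ e| ≤ S * Real.sqrt (Bsym e e) := by
    have hmem : |Bskew μ e| / Real.sqrt (Bsym e e) ∈
        {r : ℝ | ∃ v : V, v ≠ 0 ∧ r = |Bskew μ v| / Real.sqrt (Bsym v v)} :=
      ⟨e, hez, rfl⟩
    have := le_csSup hbdd hmem
    calc |Bskew μ e| = (|Bskew μ e| / Real.sqrt (Bsym e e)) * Real.sqrt (Bsym e e) := by
          field_simp
      _ ≤ S * Real.sqrt (Bsym e e) := by
          exact mul_le_mul_of_nonneg_right this (le_of_lt hse)
  have hcs : Bsym e μ ≤ Real.sqrt (Bsym e e) * Real.sqrt (Bsym μ μ) := by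
    exact cs_aux Bsym hsymm hpos e μ
  -- combine
  have hmain : Bsym e e ≤ Real.sqrt (Bsym e e) * (Real.sqrt (Bsym μ μ) + S) := by
    have h1 : Bsym e e ≤ Bsym e μ + |Bskew μ e| := by
      rw [hkey, hsplit]
      have := neg_abs_le (Bskew μ e)
      linarith
    calc Bsym e e ≤ Bsym e μ + |Bskew μ e| := h1
      _ ≤ Real.sqrt (Bsym e e) * Real.sqrt (Bsym μ μ) + S * Real.sqrt (Bsym e e) := by
          linarith
      _ = Real.sqrt (Bsym e e) * (Real.sqrt (Bsym μ μ) + S) := by ring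
  have hsq : Real.sqrt (Bsym e e) * Real.sqrt (Bsym e e) = Bsym e e :=
    Real.mul_self_sqrt (le_of_lt hee)
  exact le_of_mul_le_mul_left (by rw [hsq]; exact hmain) hse
end

section
/- DWR two-sided estimate under saturation: let $B$ be a bilinear form on a real Hilbert space $V$, $F, Q \in V^*$, $u$ the solution of $B(u,\cdot)=F$, $u_h$ the Galerkin solution on a closed subspace $V_h$, and $V_+ \supseteq V_h$ a closed subspace with Galerkin solutions $u_+$ (primal) and $\tilde u_+$ (adjoint: $B(v,\tilde u_+) = Q(v)$ for all $v \in V_+$). Assume the saturation property $|Q(u) - Q(u_+)| \le \beta\, |Q(u) - Q(u_h)|$ for some $0 \le \beta < 1$. Then, with $R(v) = F(v) - B(u_h,v)$, one has $\frac{|R(\tilde u_+)|}{1+\beta} \le |Q(u) - Q(u_h)| \le \frac{|R(\tilde u_+)|}{1-\beta}$. -/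
/-- DWR two-sided estimate under the saturation assumption:
`|R(ũ₊)|/(1+β) ≤ |Q(u) - Q(u_h)| ≤ |R(ũ₊)|/(1-β)` where
`R(v) = F(v) - B(u_h, v)`. -/
theorem dwr_two_sided_estimate
    {V : Type*} [NormedAddCommGroup V] [InnerProductSpace ℝ V] [CompleteSpace V]
    (B : V →ₗ[ℝ] V →ₗ[ℝ] ℝ)
    (M : ℝ) (hB_cont : ∀ v w : V, |B v w| ≤ M * ‖v‖ * ‖w‖)
    (α : ℝ) (hα : 0 < α) (hB_coer : ∀ v : V, α * ‖v‖ ^ 2 ≤ B v v)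
    (F Q : V →L[ℝ] ℝ)
    (u : V) (hu : ∀ v : V, B u v = F v)
    (Vh Vplus : Submodule ℝ V) (hVh : IsClosed (Vh : Set V))
    (hVplus : IsClosed (Vplus : Set V)) (hsub : Vh ≤ Vplus)
    (uh : V) (huh_mem : uh ∈ Vh) (huh : ∀ v ∈ Vh, B uh v = F v)
    (uplus : V) (huplus_mem : uplus ∈ Vplus) (huplus : ∀ v ∈ Vplus, B uplus v = F v)
    (utplus : V) (hutplus_mem : utplus ∈ Vplus)
    (hutplus : ∀ v ∈ Vplus, B v utplus = Q v)
    (β : ℝ) (hβ0 : 0 ≤ β) (hβ1 : β < 1)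
    (hsat : |Q u - Q uplus| ≤ β * |Q u - Q uh|) :
    |F utplus - B uh utplus| / (1 + β) ≤ |Q u - Q uh| ∧
    |Q u - Q uh| ≤ |F utplus - B uh utplus| / (1 - β) := by
  have huh_plus : uh ∈ Vplus := hsub huh_mem
  have hsubmem : uplus - uh ∈ Vplus := sub_mem huplus_mem huh_plus
  have hkey : F utplus - B uh utplus = Q uplus - Q uh := by
    have h1 : B uplus utplus = F utplus := huplus utplus hutplus_mem
    have h2 : B (uplus - uh) utplus = Q (uplus - uh) := hutplus _ hsubmem
    have h3 : B (uplus - uh) utplus = B uplus utplus - B uh utplus := by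
      simp [map_sub]
    rw [h2] at h3
    rw [map_sub] at h3
    linarith
  rw [hkey]
  -- Q uplus - Q uh = (Q u - Q uh) - (Q u - Q uplus)
  set x := Q u - Q uh with hx
  set y := Q u - Q uplus with hy
  have hQQ : Q uplus - Q uh = x - y := by rw [hx, hy]; ring
  rw [hQQ]
  have h1b : 0 < 1 + β := by linarith
  have h1b' : 0 < 1 - β := by linarith
  constructor
  · rw [div_le_iff₀ h1b]
    calc |x - y| ≤ |x| + |y| := abs_sub x y
      _ ≤ |x| + β * |x| := by linarith
      _ = |x| * (1 + β) := by ring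
  · rw [le_div_iff₀ h1b']
    have : |x| ≤ |x - y| + |y| := by
      calc |x| = |(x - y) + y| := by ring_nf
        _ ≤ |x - y| + |y| := abs_add_le _ _
    nlinarith [abs_nonneg (x - y), abs_nonneg x]
end
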